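/- arXiv:0904.0775 — 2 statements merged into one kernel-verified Lean document; each statement's English description precedes it below -/
import Mathlib

section
/- Let B = ∏_{i=1}^n b_{λ_i} be a finite Blaschke product with zeros λ_1,…,λ_n in the unit disc, where b_λ(z) = (λ−z)/(1−conj(λ)z), and let r = max_i |λ_i|. Then for every g in the model space K_B = H² ⊖ B·H², the derivative satisfies ‖g′‖_{H²} ≤ (5/2)·(n/(1−r))·‖g‖_{H²}. -/
open Complex Metric ComplexConjugate

noncomputable section

/-- Predicate: `f` is holomorphic on the unit disc. -/
def HolOn (f : ℂ → ℂ) : Prop := AnalyticOn ℂ f (Metric.ball 0 1)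

/-- `k`-th Taylor coefficient of `f` at the origin. -/
def coef (f : ℂ → ℂ) (k : ℕ) : ℂ := iteratedDeriv k f 0 / (Nat.factorial k)

/-- Hardy space `H²` norm via Taylor coefficients. -/
def H2norm (f : ℂ → ℂ) : ℝ := Real.sqrt (∑' k : ℕ, ‖coef f k‖ ^ 2)

def MemH2 (f : ℂ → ℂ) : Prop := HolOn f ∧ Summable (fun k : ℕ => ‖coef f k‖ ^ 2)

def Hinfnorm (f : ℂ → ℂ) : ℝ := sSup ((fun z => ‖f z‖) '' Metric.ball (0:ℂ) 1)

def MemHinf (f : ℂ → ℂ) : Prop := HolOn f ∧ BddAbove ((fun z => ‖f z‖) '' Metric.ball (0:ℂ) 1)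

/-- Elementary Blaschke factor. -/
def blaschke (l z : ℂ) : ℂ := (l - z) / (1 - conj l * z)

def BlaschkeProd {n : ℕ} (l : Fin n → ℂ) (z : ℂ) : ℂ := ∏ i, blaschke (l i) z

/-- `g` agrees with `f` on the finite sequence `l` (with multiplicities). -/
def AgreeOn {n : ℕ} (l : Fin n → ℂ) (f g : ℂ → ℂ) : Prop :=
  ∃ h : ℂ → ℂ, HolOn h ∧ ∀ z ∈ Metric.ball (0:ℂ) 1, f z - g z = BlaschkeProd l z * h z

/-- Interpolation constant `c(σ, H², H^∞)`. -/
def cH2Hinf {n : ℕ} (l : Fin n → ℂ) : ℝ :=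
  sSup { c | ∃ f, MemH2 f ∧ H2norm f ≤ 1 ∧
    c = sInf { m | ∃ g, MemHinf g ∧ Hinfnorm g = m ∧ AgreeOn l f g } }

/-- `C_{n,r}(H², H^∞)`. -/
def CnrH2Hinf (n : ℕ) (r : ℝ) : ℝ :=
  sSup { c | ∃ m, m ≤ n ∧ ∃ l : Fin m → ℂ, (∀ i, ‖l i‖ ≤ r) ∧ c = cH2Hinf l }

/-- Cauchy sesquilinear pairing. -/
def cauchyPairing (f g : ℂ → ℂ) : ℂ := ∑' k : ℕ, coef f k * conj (coef g k)

/-- Membership in the model space `K_B = H² ⊖ B H²`. -/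
def MemKB {n : ℕ} (l : Fin n → ℂ) (g : ℂ → ℂ) : Prop :=
  MemH2 g ∧ ∀ h, MemH2 h → cauchyPairing g (fun z => BlaschkeProd l z * h z) = 0

/-!
Pass to Taylor coefficients: `H²` becomes `ℂ⟦X⟧` with the `ℓ²` norm of the coefficients, and
`K_B` the set of `p / ∏_{w ∈ s} (1 - conj w z)` with `deg p < n`, `s` being the zeros of `B`.
Peeling off one zero `w`, an element of `K_B` splits as `f = a k_w + b_w h`, where
`k_w = 1 / (1 - conj w z)` is the reproducing kernel at `w`, `b_w` the Blaschke factor, and `h`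
lies in the model space of the other `m` zeros. The two parts are orthogonal since `b_w h`
vanishes at `w`, so `‖f‖² = ‖a k_w‖² + ‖h‖²`. Multiplication by `b_w` is isometric and
multiplication by `k_w` has norm at most `1 / (1 - |w|)`; as `k_w' = conj w k_w²` and
`b_w' = -(1 - |w|²) k_w²`, this gives `‖(a k_w)'‖ ≤ ‖a k_w‖ / (1 - r)` and
`‖(b_w h)'‖ ≤ ‖h'‖ + 2 ‖h‖ / (1 - r)`. With the induction hypothesis
`‖h'‖ ≤ (5m/2) ‖h‖ / (1 - r)` and Cauchy–Schwarz,
`‖f'‖ ≤ (‖a k_w‖ + (5m/2 + 2) ‖h‖) / (1 - r) ≤ 5 (m + 1) / (2 (1 - r)) ‖f‖`.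
-/

open scoped PowerSeries Polynomial InnerProductSpace lp Topology

theorem add_mul_le_mul_of_sq_eq_add_sq {x y c d N : ℝ} (hd : 0 ≤ d) (hN : 0 ≤ N)
    (hsq : N ^ 2 = x ^ 2 + y ^ 2) (hcd : 1 + c ^ 2 ≤ d ^ 2) : x + c * y ≤ d * N :=
  le_of_sq_le_sq (by nlinarith [sq_nonneg (c * x - y), sq_nonneg x, sq_nonneg y]) (by positivity)

theorem Polynomial.reverse_multiset_prod_X_sub_C {R : Type*} [CommRing R] [IsDomain R]
    (s : Multiset R) :
    ((s.map fun w => X - C w).prod).reverse = (s.map fun w => 1 - C w * X).prod := by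
  have h1 : (1 : R[X]).reverse = 1 := by simpa using reverse_C (1 : R)
  have hX : (X : R[X]).reverse = 1 := by simpa [h1] using reverse_mul_X (1 : R[X])
  induction s using Multiset.induction_on with
  | empty => simpa using h1
  | cons w s ih =>
    rw [Multiset.map_cons, Multiset.prod_cons, reverse_mul_of_domain, ih, Multiset.map_cons,
      Multiset.prod_cons, sub_eq_add_neg, ← C_neg, reverse_add_C, hX, natDegree_X, pow_one, C_neg,
      neg_mul, ← sub_eq_add_neg]

theorem Polynomial.exists_sub_C_mul_eq_X_sub_C_mul {K : Type*} [Field K] {p Q : K[X]}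
    {m : ℕ} {w : K} (hp : p.degree ≤ m) (hQ : Q.natDegree ≤ m) (hQw : Q.eval w ≠ 0) :
    ∃ a q, q.degree < (m : WithBot ℕ) ∧ p - C a * Q = (X - C w) * q := by
  set r := p - C (p.eval w / Q.eval w) * Q
  refine ⟨p.eval w / Q.eval w, r /ₘ (X - C w), ?_,
    (mul_divByMonic_eq_iff_isRoot.mpr (by simp [div_mul_cancel₀ _ hQw])).symm⟩
  have hr : r.degree ≤ m := (degree_sub_le _ _).trans <| max_le hp <|
    degree_le_natDegree.trans (WithBot.coe_le_coe.mpr ((natDegree_C_mul_le _ _).trans hQ))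
  rcases eq_or_ne r 0 with hr0 | hr0
  · simp [hr0]
  · exact (degree_divByMonic_lt r _ hr0 (by simp)).trans_le hr

namespace PowerSeries

variable {f g : ℂ⟦X⟧} {w : ℂ}

def l2Norm (f : ℂ⟦X⟧) : ℝ := √(∑' k, ‖coeff k f‖ ^ 2)

theorem l2Norm_nonneg (f : ℂ⟦X⟧) : 0 ≤ l2Norm f := Real.sqrt_nonneg _

theorem l2Norm_eq_norm (F : ℓ²(ℕ, ℂ)) (hF : ∀ k, coeff k f = F k) : l2Norm f = ‖F‖ := by
  rw [l2Norm, Real.sqrt_eq_rpow, lp.norm_eq_tsum_rpow (by simp)]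
  simp [hF]

def MemL2 (f : ℂ⟦X⟧) : Prop := Memℓp (fun k => coeff k f) 2

def MemL2.toL2 (hf : MemL2 f) : ℓ²(ℕ, ℂ) := ⟨fun k => coeff k f, hf⟩

namespace MemL2

@[simp]
theorem toL2_apply (hf : MemL2 f) (k : ℕ) : hf.toL2 k = coeff k f := rfl

theorem norm_toL2 (hf : MemL2 f) : ‖hf.toL2‖ = l2Norm f :=
  (l2Norm_eq_norm _ fun _ => rfl).symm

theorem inner_toL2 (hf : MemL2 f) (hg : MemL2 g) :
    ⟪hf.toL2, hg.toL2⟫_ℂ = ∑' k, conj (coeff k f) * coeff k g := by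
  simp [lp.inner_eq_tsum, mul_comm]

end MemL2

theorem l2Norm_add_le (hf : MemL2 f) (hg : MemL2 g) : l2Norm (f + g) ≤ l2Norm f + l2Norm g := by
  rw [l2Norm_eq_norm (hf.toL2 + hg.toL2) fun k => by simp, ← hf.norm_toL2, ← hg.norm_toL2]
  exact norm_add_le _ _

theorem l2Norm_C_mul (c : ℂ) (f : ℂ⟦X⟧) : l2Norm (C c * f) = ‖c‖ * l2Norm f := by
  simp only [l2Norm, coeff_C_mul, norm_mul, mul_pow, tsum_mul_left]
  rw [Real.sqrt_mul (by positivity), Real.sqrt_sq (norm_nonneg c)]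

theorem l2Norm_X_mul (f : ℂ⟦X⟧) : l2Norm (X * f) = l2Norm f := by
  have hshift : (fun k => ‖coeff (k + 1) (X * f)‖ ^ 2) = fun k => ‖coeff k f‖ ^ 2 := by
    simp [coeff_succ_X_mul]
  rw [l2Norm, l2Norm]
  congr 1
  by_cases hs : Summable fun k => ‖coeff k f‖ ^ 2
  · rw [tsum_eq_zero_add' (hshift ▸ hs), hshift]
    simp
  · rw [tsum_eq_zero_of_not_summable hs, tsum_eq_zero_of_not_summable]
    rwa [← summable_nat_add_iff 1, hshift]

def GeomDecay (f : ℂ⟦X⟧) : Prop := ∃ R > 1, Summable fun k => ‖coeff k f‖ * R ^ k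

theorem summable_norm_coeff_mul_pow_of_le {R R' : ℝ}
    (h : Summable fun k => ‖coeff k f‖ * R ^ k) (hR' : 0 ≤ R') (hRR' : R' ≤ R) :
    Summable fun k => ‖coeff k f‖ * R' ^ k :=
  h.of_nonneg_of_le (fun _ => by positivity) fun k => by gcongr

theorem coeff_inv_one_sub_C_mul_X {K : Type*} [Field K] (a : K) (k : ℕ) :
    coeff k (1 - C a * X)⁻¹ = a ^ k := by
  have h : rescale a (mk 1) * (1 - C a * X) = 1 := by
    rw [← rescale_X, ← map_one (rescale a), ← map_sub, ← map_mul, mk_one_mul_one_sub_eq_one,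
      map_one]
  rw [← (eq_inv_iff_mul_eq_one (by simp)).mpr h, coeff_rescale]
  simp

namespace GeomDecay

theorem add (hf : GeomDecay f) (hg : GeomDecay g) : GeomDecay (f + g) := by
  obtain ⟨R, hR, hfR⟩ := hf
  obtain ⟨S, hS, hgS⟩ := hg
  refine ⟨min R S, lt_min hR hS,
    ((summable_norm_coeff_mul_pow_of_le hfR (by positivity) (min_le_left R S)).add
      (summable_norm_coeff_mul_pow_of_le hgS (by positivity) (min_le_right R S))).of_nonneg_of_le
      (fun _ => by positivity) fun k => ?_⟩
  rw [map_add, ← add_mul]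
  gcongr
  exact norm_add_le _ _

open Finset in
theorem mul (hf : GeomDecay f) (hg : GeomDecay g) : GeomDecay (f * g) := by
  obtain ⟨R, hR, hfR⟩ := hf
  obtain ⟨S, hS, hgS⟩ := hg
  set T := min R S
  have hT : 0 ≤ T := by positivity
  have hnorm {u : ℂ⟦X⟧} (hu : Summable fun k => ‖coeff k u‖ * T ^ k) :
      Summable fun k => ‖‖coeff k u‖ * T ^ k‖ :=
    hu.congr fun k => (Real.norm_of_nonneg (by positivity)).symm
  -- the Cauchy product of the two majorant series is a majorant series for `f * g`
  refine ⟨T, lt_min hR hS, (summable_norm_sum_mul_antidiagonal_of_summable_norm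
    (hnorm (summable_norm_coeff_mul_pow_of_le hfR hT (min_le_left R S)))
    (hnorm (summable_norm_coeff_mul_pow_of_le hgS hT (min_le_right R S)))).of_nonneg_of_le
    (fun _ => by positivity) fun k => ?_⟩
  rw [Real.norm_of_nonneg (by positivity), coeff_mul]
  calc ‖∑ p ∈ antidiagonal k, coeff p.1 f * coeff p.2 g‖ * T ^ k
      ≤ (∑ p ∈ antidiagonal k, ‖coeff p.1 f‖ * ‖coeff p.2 g‖) * T ^ k := by
        gcongr
        exact (norm_sum_le _ _).trans (sum_le_sum fun p _ => norm_mul_le _ _)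
    _ = ∑ p ∈ antidiagonal k, ‖coeff p.1 f‖ * T ^ p.1 * (‖coeff p.2 g‖ * T ^ p.2) := by
        rw [sum_mul]
        refine sum_congr rfl fun p hp => ?_
        rw [← mem_antidiagonal.mp hp, pow_add]
        ring

theorem C_mul (c : ℂ) (hf : GeomDecay f) : GeomDecay (C c * f) := by
  obtain ⟨R, hR, hfR⟩ := hf
  exact ⟨R, hR, (hfR.mul_left ‖c‖).congr fun k => by rw [coeff_C_mul, norm_mul, mul_assoc]⟩

theorem coe (p : ℂ[X]) : GeomDecay (p : ℂ⟦X⟧) :=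
  ⟨2, one_lt_two, summable_of_ne_finset_zero (s := p.support) fun k hk => by
    simp [Polynomial.notMem_support_iff.mp hk]⟩

theorem X_mul (hf : GeomDecay f) : GeomDecay (X * f) := by
  have h := (coe Polynomial.X).mul hf
  rwa [Polynomial.coe_X] at h

theorem inv_one_sub_C_mul_X {a : ℂ} (ha : ‖a‖ < 1) : GeomDecay (1 - C a * X)⁻¹ := by
  obtain ⟨t, hat, ht1⟩ := exists_between ha
  have ht0 : 0 < t := (norm_nonneg a).trans_lt hat
  refine ⟨t⁻¹, one_lt_inv₀ ht0 |>.mpr ht1,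
    (summable_geometric_of_lt_one (by positivity) ((div_lt_one ht0).mpr hat)).congr fun k => ?_⟩
  rw [coeff_inv_one_sub_C_mul_X, norm_pow, div_pow, inv_pow, div_eq_mul_inv]

theorem derivative (hf : GeomDecay f) : GeomDecay (d⁄dX ℂ f) := by
  obtain ⟨R, hR, hfR⟩ := hf
  obtain ⟨R', hR', hR'R⟩ := exists_between hR
  set B := ∑' k, ‖coeff k f‖ * R ^ k
  have hR0 : 0 < R := by linarith
  have hq : ‖R' / R‖ < 1 := by
    rw [Real.norm_of_nonneg (by positivity), div_lt_one hR0]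
    exact hR'R
  have hgeom : Summable fun k : ℕ => B / R * (((k : ℝ) + 1) * (R' / R) ^ k) := by
    refine Summable.mul_left _ ?_
    simpa [add_mul] using (summable_pow_mul_geometric_of_norm_lt_one 1 hq).add
      (summable_geometric_of_norm_lt_one hq)
  refine ⟨R', hR', hgeom.of_nonneg_of_le (fun _ => by positivity) fun k => ?_⟩
  have hB : ‖coeff (k + 1) f‖ * (R ^ k * R) ≤ B := by
    simpa [pow_succ] using hfR.le_tsum (k + 1) fun _ _ => by positivity
  rw [coeff_derivative, norm_mul, ← Nat.cast_succ, Complex.norm_natCast, div_pow]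
  calc ‖coeff (k + 1) f‖ * (k + 1 : ℕ) * R' ^ k
      = (‖coeff (k + 1) f‖ * (R ^ k * R)) / R * ((k + 1 : ℕ) * (R' ^ k / R ^ k)) := by
        field_simp
    _ ≤ B / R * (((k : ℝ) + 1) * (R' ^ k / R ^ k)) := by
        push_cast
        gcongr

theorem memL2 (hf : GeomDecay f) : MemL2 f := by
  obtain ⟨R, hR, hfR⟩ := hf
  have hle (k : ℕ) : ‖coeff k f‖ ≤ ‖coeff k f‖ * R ^ k :=
    le_mul_of_one_le_right (norm_nonneg _) (one_le_pow₀ hR.le)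
  set B := ∑' k, ‖coeff k f‖ * R ^ k
  have hB (k : ℕ) : ‖coeff k f‖ ≤ B := (hle k).trans (hfR.le_tsum k fun _ _ => by positivity)
  refine memℓp_gen <| (hfR.mul_left B).of_nonneg_of_le (fun _ => by positivity) fun k => ?_
  rw [ENNReal.toReal_ofNat, Real.rpow_two, sq]
  exact mul_le_mul (hB k) (hle k) (norm_nonneg _) ((norm_nonneg _).trans (hB k))

theorem summable_coeff_mul_pow (hf : GeomDecay f) {z : ℂ} (hz : ‖z‖ ≤ 1) :
    Summable fun k => coeff k f * z ^ k := by
  obtain ⟨R, hR, hfR⟩ := hf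
  refine .of_norm ((summable_norm_coeff_mul_pow_of_le hfR (norm_nonneg z) (hz.trans hR.le)).congr
    fun k => ?_)
  rw [norm_mul, norm_pow]

end GeomDecay

def kernel (w : ℂ) : ℂ⟦X⟧ := (1 - C (conj w) * X)⁻¹

def blaschkeFactor (w : ℂ) : ℂ⟦X⟧ := (C w - X) * kernel w

def evalAt (w : ℂ) (f : ℂ⟦X⟧) : ℂ := ∑' k, coeff k f * w ^ k

theorem kernel_mul_one_sub (w : ℂ) : kernel w * (1 - C (conj w) * X) = 1 :=
  PowerSeries.inv_mul_cancel _ (by simp)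

theorem coeff_kernel (w : ℂ) (k : ℕ) : coeff k (kernel w) = conj w ^ k :=
  coeff_inv_one_sub_C_mul_X _ k

theorem GeomDecay.kernel (hw : ‖w‖ < 1) : GeomDecay (kernel w) :=
  inv_one_sub_C_mul_X (by rwa [RCLike.norm_conj])

theorem GeomDecay.blaschkeFactor (hw : ‖w‖ < 1) : GeomDecay (blaschkeFactor w) := by
  have h := (coe (Polynomial.C w - Polynomial.X)).mul (kernel hw)
  rwa [Polynomial.coe_sub, Polynomial.coe_C, Polynomial.coe_X] at h

theorem derivative_kernel (w : ℂ) : d⁄dX ℂ (kernel w) = C (conj w) * kernel w ^ 2 := by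
  rw [kernel, derivative_inv']
  simp [mul_comm]

theorem derivative_blaschkeFactor (w : ℂ) :
    d⁄dX ℂ (blaschkeFactor w) = -C ((1 - ‖w‖ ^ 2 : ℝ) : ℂ) * kernel w ^ 2 := by
  rw [blaschkeFactor, Derivation.leibniz, derivative_kernel, Complex.ofReal_sub, Complex.ofReal_one,
    Complex.ofReal_pow, ← Complex.conj_mul']
  simp only [smul_eq_mul, map_sub, derivative_C, derivative_X, map_mul, map_one]
  linear_combination kernel w * kernel_mul_one_sub w

theorem l2Norm_kernel_mul_le (hw : ‖w‖ < 1) (hf : GeomDecay f) :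
    l2Norm (kernel w * f) ≤ (1 - ‖w‖)⁻¹ * l2Norm f := by
  set u := kernel w * f
  have hu : GeomDecay u := (GeomDecay.kernel hw).mul hf
  have hfu : u = f + C (conj w) * (X * u) := by
    linear_combination f * kernel_mul_one_sub w
  have hle : l2Norm u ≤ l2Norm f + ‖w‖ * l2Norm u :=
    calc l2Norm u = l2Norm (f + C (conj w) * (X * u)) := congrArg l2Norm hfu
      _ ≤ l2Norm f + l2Norm (C (conj w) * (X * u)) :=
        l2Norm_add_le hf.memL2 (hu.X_mul.C_mul _).memL2
      _ = l2Norm f + ‖w‖ * l2Norm u := by rw [l2Norm_C_mul, l2Norm_X_mul, RCLike.norm_conj]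
  rw [le_inv_mul_iff₀ (by linarith)]
  linarith

theorem l2Norm_C_sub_X_mul (a : ℂ) {u : ℂ⟦X⟧} (hu : MemL2 u) (hXu : MemL2 (X * u)) :
    l2Norm ((C a - X) * u) = l2Norm ((1 - C (conj a) * X) * u) := by
  set U := hu.toL2
  set S := hXu.toL2
  have hS : ‖S‖ = ‖U‖ := by rw [hu.norm_toL2, hXu.norm_toL2, l2Norm_X_mul]
  -- both squared norms expand to `|a|² ‖U‖² - 2 Re (conj a ⟪U, S⟫) + ‖U‖²`
  rw [l2Norm_eq_norm (a • U - S) fun k => by simp [U, S, sub_mul]; rfl,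
    l2Norm_eq_norm (U - conj a • S) fun k => by simp [U, S, sub_mul, mul_assoc]; rfl,
    ← sq_eq_sq₀ (norm_nonneg _) (norm_nonneg _), norm_sub_sq (𝕜 := ℂ), norm_sub_sq (𝕜 := ℂ),
    inner_smul_left, inner_smul_right, norm_smul, norm_smul, hS, RCLike.norm_conj]
  ring

theorem l2Norm_blaschkeFactor_mul (hw : ‖w‖ < 1) (hf : GeomDecay f) :
    l2Norm (blaschkeFactor w * f) = l2Norm f := by
  have hu := (GeomDecay.kernel hw).mul hf
  have h := l2Norm_C_sub_X_mul w hu.memL2 hu.X_mul.memL2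
  rwa [← mul_assoc, ← mul_assoc, mul_comm (1 - _), kernel_mul_one_sub, one_mul] at h

theorem inner_toL2_kernel (hw : ‖w‖ < 1) (hf : MemL2 f) :
    ⟪(GeomDecay.kernel hw).memL2.toL2, hf.toL2⟫_ℂ = evalAt w f := by
  simp [MemL2.inner_toL2, evalAt, coeff_kernel, mul_comm]

theorem evalAt_C_sub_X_mul (hw : ‖w‖ ≤ 1) {u : ℂ⟦X⟧} (hu : GeomDecay u) :
    evalAt w ((C w - X) * u) = 0 := by
  have hs := hu.summable_coeff_mul_pow hw
  have hX := hu.X_mul.summable_coeff_mul_pow hw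
  have hshift : ∑' k, coeff k (X * u) * w ^ k = w * ∑' k, coeff k u * w ^ k := by
    rw [hX.tsum_eq_zero_add, ← tsum_mul_left]
    simp [pow_succ, mul_comm, mul_assoc]
  simp only [evalAt, sub_mul, map_sub, coeff_C_mul, mul_assoc]
  rw [(hs.mul_left w).tsum_sub hX, hshift, tsum_mul_left, sub_self]

theorem l2Norm_sq_C_mul_kernel_add_blaschkeFactor_mul (hw : ‖w‖ < 1) (a : ℂ)
    (hf : GeomDecay f) :
    l2Norm (C a * kernel w + blaschkeFactor w * f) ^ 2 =
      l2Norm (C a * kernel w) ^ 2 + l2Norm f ^ 2 := by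
  have hK := (GeomDecay.kernel hw).memL2
  have hBf := ((GeomDecay.blaschkeFactor hw).mul hf).memL2
  have horth : ⟪a • hK.toL2, hBf.toL2⟫_ℂ = 0 := by
    rw [inner_smul_left, inner_toL2_kernel hw, blaschkeFactor, mul_assoc,
      evalAt_C_sub_X_mul hw.le ((GeomDecay.kernel hw).mul hf), mul_zero]
  rw [← l2Norm_blaschkeFactor_mul hw hf,
    l2Norm_eq_norm (a • hK.toL2 + hBf.toL2) fun k => by simp; rfl,
    l2Norm_eq_norm (a • hK.toL2) fun k => by simp, ← hBf.norm_toL2, sq, sq, sq,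
    norm_add_sq_eq_norm_sq_add_norm_sq_of_inner_eq_zero _ _ horth]

theorem l2Norm_derivative_C_mul_kernel_le (hw : ‖w‖ < 1) (a : ℂ) :
    l2Norm (d⁄dX ℂ (C a * kernel w)) ≤ (1 - ‖w‖)⁻¹ * l2Norm (C a * kernel w) := by
  rw [Derivation.leibniz, derivative_C, smul_zero, add_zero, smul_eq_mul, derivative_kernel, sq,
    ← mul_assoc, ← map_mul, l2Norm_C_mul, l2Norm_C_mul, norm_mul, RCLike.norm_conj]
  calc ‖a‖ * ‖w‖ * l2Norm (kernel w * kernel w)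
      ≤ ‖a‖ * 1 * ((1 - ‖w‖)⁻¹ * l2Norm (kernel w)) := by
        gcongr ‖a‖ * ?_ * ?_
        · exact l2Norm_nonneg _
        · exact l2Norm_kernel_mul_le hw (GeomDecay.kernel hw)
    _ = (1 - ‖w‖)⁻¹ * (‖a‖ * l2Norm (kernel w)) := by ring

theorem l2Norm_derivative_blaschkeFactor_mul_le (hw : ‖w‖ < 1) (hf : GeomDecay f) :
    l2Norm (d⁄dX ℂ (blaschkeFactor w * f)) ≤
      l2Norm (d⁄dX ℂ f) + (1 + ‖w‖) / (1 - ‖w‖) * l2Norm f := by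
  have hk := GeomDecay.kernel hw
  have hderiv : d⁄dX ℂ (blaschkeFactor w * f) = blaschkeFactor w * d⁄dX ℂ f +
      C (-((1 - ‖w‖ ^ 2 : ℝ) : ℂ)) * (kernel w * (kernel w * f)) := by
    rw [Derivation.leibniz, derivative_blaschkeFactor, smul_eq_mul, smul_eq_mul, map_neg]
    ring
  rw [hderiv]
  refine (l2Norm_add_le ((GeomDecay.blaschkeFactor hw).mul hf.derivative).memL2
    ((hk.mul (hk.mul hf)).C_mul _).memL2).trans ?_
  rw [l2Norm_blaschkeFactor_mul hw hf.derivative, l2Norm_C_mul, norm_neg,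
    Complex.norm_of_nonneg (by nlinarith [norm_nonneg w])]
  gcongr l2Norm (d⁄dX ℂ f) + ?_
  calc (1 - ‖w‖ ^ 2) * l2Norm (kernel w * (kernel w * f))
      ≤ (1 - ‖w‖ ^ 2) * ((1 - ‖w‖)⁻¹ * ((1 - ‖w‖)⁻¹ * l2Norm f)) := by
        gcongr
        · nlinarith [norm_nonneg w]
        · exact (l2Norm_kernel_mul_le hw (hk.mul hf)).trans
            (mul_le_mul_of_nonneg_left (l2Norm_kernel_mul_le hw hf) (inv_nonneg.mpr (by linarith)))
    _ = (1 + ‖w‖) / (1 - ‖w‖) * l2Norm f := by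
        have : 1 - ‖w‖ ≠ 0 := by linarith
        field_simp
        ring

def blaschkeDenom (s : Multiset ℂ) : ℂ[X] :=
  (s.map fun w => 1 - Polynomial.C (conj w) * Polynomial.X).prod

/-- The model space `K_B` of the Blaschke product `B` with zeros `s`. -/
def MemModelSpace (s : Multiset ℂ) (f : ℂ⟦X⟧) : Prop :=
  ∃ p : ℂ[X], p.degree < Multiset.card s ∧ (blaschkeDenom s : ℂ⟦X⟧) * f = p

theorem constantCoeff_blaschkeDenom (s : Multiset ℂ) :
    constantCoeff (blaschkeDenom s : ℂ⟦X⟧) = 1 := by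
  simp [blaschkeDenom, Polynomial.coeff_zero_eq_eval_zero, Polynomial.eval_multiset_prod]

theorem natDegree_blaschkeDenom_le (s : Multiset ℂ) :
    (blaschkeDenom s).natDegree ≤ Multiset.card s := by
  refine (Polynomial.natDegree_multiset_prod_le _).trans ?_
  rw [Multiset.map_map]
  refine (Multiset.sum_le_card_nsmul _ 1 ?_).trans (by simp)
  simp only [Multiset.mem_map, Function.comp_apply, forall_exists_index, and_imp,
    forall_apply_eq_imp_iff₂]
  intro _ _
  compute_degree

theorem eval_blaschkeDenom_ne_zero {s : Multiset ℂ} (hs : ∀ v ∈ s, ‖v‖ ≤ 1) (hw : ‖w‖ < 1) :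
    (blaschkeDenom s).eval w ≠ 0 := by
  rw [blaschkeDenom, Polynomial.eval_multiset_prod, Multiset.map_map]
  refine Multiset.prod_ne_zero fun h0 => ?_
  obtain ⟨v, hv, hv0⟩ := Multiset.mem_map.mp h0
  simp only [Function.comp_apply, Polynomial.eval_sub, Polynomial.eval_one, Polynomial.eval_mul,
    Polynomial.eval_C, Polynomial.eval_X, sub_eq_zero] at hv0
  have hvw : ‖conj v * w‖ < 1 := by
    rw [norm_mul, RCLike.norm_conj]
    nlinarith [hs v hv, norm_nonneg v, norm_nonneg w]
  rw [← hv0, norm_one] at hvw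
  exact lt_irrefl _ hvw

theorem MemModelSpace.eq_zero (hf : MemModelSpace 0 f) : f = 0 := by
  obtain ⟨p, hp, hfp⟩ := hf
  rw [Multiset.card_zero, Nat.cast_zero, Nat.WithBot.lt_zero_iff, Polynomial.degree_eq_bot] at hp
  simpa [blaschkeDenom, hp] using hfp

theorem MemModelSpace.exists_eq_C_mul_kernel_add_blaschkeFactor_mul {s : Multiset ℂ}
    (hs : ∀ v ∈ s, ‖v‖ ≤ 1) (hw : ‖w‖ < 1) (hf : MemModelSpace (w ::ₘ s) f) :
    ∃ a h, MemModelSpace s h ∧ f = C a * kernel w + blaschkeFactor w * h := by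
  obtain ⟨p, hp, hfp⟩ := hf
  set Q := blaschkeDenom s
  obtain ⟨a, q, hq, hpq⟩ := Polynomial.exists_sub_C_mul_eq_X_sub_C_mul
    (Order.le_of_lt_succ (by rwa [Multiset.card_cons] at hp)) (natDegree_blaschkeDenom_le s)
    (eval_blaschkeDenom_ne_zero hs hw)
  have hQ : (Q : ℂ⟦X⟧) * (Q : ℂ⟦X⟧)⁻¹ = 1 :=
    PowerSeries.mul_inv_cancel _ (by rw [constantCoeff_blaschkeDenom]; exact one_ne_zero)
  refine ⟨a, (Q : ℂ⟦X⟧)⁻¹ * (-q : ℂ[X]), ⟨-q, by rwa [Polynomial.degree_neg], ?_⟩, ?_⟩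
  · rw [← mul_assoc, hQ, one_mul]
  have hD : (blaschkeDenom (w ::ₘ s) : ℂ⟦X⟧) = (1 - C (conj w) * X) * (Q : ℂ⟦X⟧) := by
    simp [blaschkeDenom, Q]
  have hD0 : (blaschkeDenom (w ::ₘ s) : ℂ⟦X⟧) ≠ 0 := fun h0 => by
    simpa [h0] using constantCoeff_blaschkeDenom (w ::ₘ s)
  refine mul_left_cancel₀ hD0 ?_
  have hpq' := congrArg (fun p : ℂ[X] => (p : ℂ⟦X⟧)) hpq
  simp only [Polynomial.coe_mul, Polynomial.coe_sub, Polynomial.coe_X, Polynomial.coe_C] at hpq'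
  rw [hfp, hD, blaschkeFactor, Polynomial.coe_neg]
  linear_combination (-(C a * Q) - (X - C w) * q * Q * (Q : ℂ⟦X⟧)⁻¹) * kernel_mul_one_sub w
    - (X - C w) * q * hQ + hpq'

theorem MemModelSpace.geomDecay {s : Multiset ℂ} (hs : ∀ v ∈ s, ‖v‖ < 1)
    (hf : MemModelSpace s f) : GeomDecay f := by
  induction s using Multiset.induction_on generalizing f with
  | empty => simpa [hf.eq_zero] using GeomDecay.coe 0
  | cons w s ih =>
    have hw := hs w (Multiset.mem_cons_self w s)
    have hs' : ∀ v ∈ s, ‖v‖ < 1 := fun v hv => hs v (Multiset.mem_cons_of_mem hv)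
    obtain ⟨a, h, hh, rfl⟩ := hf.exists_eq_C_mul_kernel_add_blaschkeFactor_mul
      (fun v hv => (hs' v hv).le) hw
    exact ((GeomDecay.kernel hw).C_mul a).add ((GeomDecay.blaschkeFactor hw).mul (ih hs' hh))

theorem l2Norm_derivative_C_mul_kernel_add_blaschkeFactor_mul_le {r m : ℝ} {h : ℂ⟦X⟧}
    (hr : r < 1) (hw : ‖w‖ ≤ r) (hm : 0 ≤ m) (a : ℂ) (hh : GeomDecay h)
    (hh' : l2Norm (d⁄dX ℂ h) ≤ 5 / 2 * (m / (1 - r)) * l2Norm h) :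
    l2Norm (d⁄dX ℂ (C a * kernel w + blaschkeFactor w * h)) ≤
      5 / 2 * ((m + 1) / (1 - r)) * l2Norm (C a * kernel w + blaschkeFactor w * h) := by
  have hw1 : ‖w‖ < 1 := hw.trans_lt hr
  have hr' : 0 < 1 - r := by linarith
  have hfactor : (1 + ‖w‖) / (1 - ‖w‖) ≤ 2 * (1 - r)⁻¹ := by
    rw [← div_eq_mul_inv, div_le_div_iff₀ (by linarith) hr']
    nlinarith [norm_nonneg w]
  have hkernel : l2Norm (d⁄dX ℂ (C a * kernel w)) ≤ (1 - r)⁻¹ * l2Norm (C a * kernel w) :=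
    (l2Norm_derivative_C_mul_kernel_le hw1 a).trans (by gcongr; exact l2Norm_nonneg _)
  have hblaschke : l2Norm (d⁄dX ℂ (blaschkeFactor w * h)) ≤
      (1 - r)⁻¹ * ((5 / 2 * m + 2) * l2Norm h) := by
    refine (l2Norm_derivative_blaschkeFactor_mul_le hw1 hh).trans ?_
    have := mul_le_mul_of_nonneg_right hfactor (l2Norm_nonneg h)
    calc _ ≤ 5 / 2 * (m / (1 - r)) * l2Norm h + 2 * (1 - r)⁻¹ * l2Norm h := by gcongr
      _ = _ := by ring
  calc l2Norm (d⁄dX ℂ (C a * kernel w + blaschkeFactor w * h))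
      ≤ l2Norm (d⁄dX ℂ (C a * kernel w)) + l2Norm (d⁄dX ℂ (blaschkeFactor w * h)) := by
        rw [map_add]
        exact l2Norm_add_le ((GeomDecay.kernel hw1).C_mul a).derivative.memL2
          ((GeomDecay.blaschkeFactor hw1).mul hh).derivative.memL2
    _ ≤ (1 - r)⁻¹ * (l2Norm (C a * kernel w) + (5 / 2 * m + 2) * l2Norm h) := by
        rw [mul_add]
        exact add_le_add hkernel hblaschke
    _ ≤ (1 - r)⁻¹ * (5 / 2 * (m + 1) * l2Norm (C a * kernel w + blaschkeFactor w * h)) := by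
        gcongr
        exact add_mul_le_mul_of_sq_eq_add_sq (by positivity) (l2Norm_nonneg _)
          (l2Norm_sq_C_mul_kernel_add_blaschkeFactor_mul hw1 a hh) (by nlinarith)
    _ = _ := by ring

theorem MemModelSpace.l2Norm_derivative_le {s : Multiset ℂ} {r : ℝ} (hr : r < 1)
    (hs : ∀ w ∈ s, ‖w‖ ≤ r) (hf : MemModelSpace s f) :
    l2Norm (d⁄dX ℂ f) ≤ 5 / 2 * (Multiset.card s / (1 - r)) * l2Norm f := by
  induction s using Multiset.induction_on generalizing f with
  | empty => simp [hf.eq_zero, l2Norm]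
  | cons w s ih =>
    have hw : ‖w‖ ≤ r := hs w (Multiset.mem_cons_self w s)
    have hs' : ∀ v ∈ s, ‖v‖ ≤ r := fun v hv => hs v (Multiset.mem_cons_of_mem hv)
    obtain ⟨a, h, hh, rfl⟩ := hf.exists_eq_C_mul_kernel_add_blaschkeFactor_mul
      (fun v hv => (hs' v hv).trans hr.le) (hw.trans_lt hr)
    rw [Multiset.card_cons, Nat.cast_succ]
    exact l2Norm_derivative_C_mul_kernel_add_blaschkeFactor_mul_le hr hw (Nat.cast_nonneg _) a
      (hh.geomDecay fun v hv => (hs' v hv).trans_lt hr) (ih hs' hh)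

theorem reverse_map_conj_prod_X_sub_C (s : Multiset ℂ) :
    (((s.map fun w => Polynomial.X - Polynomial.C w).prod).map (starRingEnd ℂ)).reverse =
      blaschkeDenom s := by
  rw [Polynomial.map_multiset_prod, Multiset.map_map,
    show (Polynomial.map (starRingEnd ℂ) ∘ fun w => Polynomial.X - Polynomial.C w) =
      (fun w => Polynomial.X - Polynomial.C w) ∘ conj from funext fun w => by simp,
    ← Multiset.map_map, Polynomial.reverse_multiset_prod_X_sub_C, Multiset.map_map]
  rfl

theorem tsum_coeff_mul_conj_coeff (G : ℂ⟦X⟧) (F : ℂ[X]) :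
    ∑' k, coeff k G * conj (F.coeff k) =
      coeff F.natDegree (G * ((F.map (starRingEnd ℂ)).reverse : ℂ⟦X⟧)) := by
  rw [tsum_eq_sum (s := Finset.range (F.natDegree + 1)) fun k hk => by
      rw [Polynomial.coeff_eq_zero_of_natDegree_lt (by simpa using hk), map_zero, mul_zero],
    coeff_mul, Finset.Nat.sum_antidiagonal_eq_sum_range_succ_mk]
  refine Finset.sum_congr rfl fun k hk => ?_
  rw [Polynomial.coeff_coe, Polynomial.coeff_reverse,
    Polynomial.natDegree_map_eq_of_injective (RingHom.injective _),
    Polynomial.revAt_le (by simp), Polynomial.coeff_map,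
    Nat.sub_sub_self (by simpa [Nat.lt_succ_iff] using hk)]

end PowerSeries

open PowerSeries

theorem coef_deriv (g : ℂ → ℂ) (k : ℕ) : coef (deriv g) k = (k + 1) * coef g (k + 1) := by
  rw [coef, coef, ← iteratedDeriv_succ', Nat.factorial_succ, Nat.cast_mul]
  field_simp
  push_cast
  ring

theorem mk_coef_deriv (g : ℂ → ℂ) : mk (coef (deriv g)) = d⁄dX ℂ (mk (coef g)) := by
  ext k
  rw [coeff_derivative, coeff_mk, coeff_mk, coef_deriv, mul_comm]

theorem H2norm_eq_l2Norm (g : ℂ → ℂ) : H2norm g = l2Norm (mk (coef g)) := by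
  simp [H2norm, l2Norm]

theorem iteratedDeriv_polynomial_eval (p : ℂ[X]) (k : ℕ) :
    iteratedDeriv k (fun z => p.eval z) = fun z => (Polynomial.derivative^[k] p).eval z := by
  induction k with
  | zero => simp
  | succ k ih =>
    rw [iteratedDeriv_succ, ih, Function.iterate_succ_apply']
    exact funext fun z => Polynomial.deriv _

theorem coef_polynomial_eval (p : ℂ[X]) (k : ℕ) : coef (fun z => p.eval z) k = p.coeff k := by
  rw [coef, iteratedDeriv_polynomial_eval]
  dsimp only
  rw [← Polynomial.coeff_zero_eq_eval_zero, Polynomial.coeff_iterate_derivative, zero_add,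
    Nat.descFactorial_self, nsmul_eq_mul,
    mul_div_cancel_left₀ _ (Nat.cast_ne_zero.mpr k.factorial_ne_zero)]

theorem memH2_polynomial_eval (p : ℂ[X]) : MemH2 fun z => p.eval z := by
  refine ⟨(p.differentiable.differentiableOn.analyticOnNhd isOpen_ball).analyticOn, ?_⟩
  refine summable_of_ne_finset_zero (s := p.support) fun k hk => ?_
  simp [coef_polynomial_eval, Polynomial.notMem_support_iff.mp hk]

theorem eventually_blaschkeProd_mul_eq {n : ℕ} (l : Fin n → ℂ) :
    ∀ᶠ z in 𝓝 0, BlaschkeProd l z * ((-1) ^ n * ∏ i, (1 - conj (l i) * z)) = ∏ i, (z - l i) := by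
  have hne : ∀ᶠ z in 𝓝 (0 : ℂ), ∀ i, 1 - conj (l i) * z ≠ 0 :=
    Filter.eventually_all.mpr fun i =>
      (by fun_prop : Continuous fun z : ℂ => 1 - conj (l i) * z).continuousAt.eventually_ne
        (by simp)
  filter_upwards [hne] with z hz
  have hprod : ∏ i, (z - l i) = (-1) ^ n * ∏ i, (l i - z) :=
    calc ∏ i, (z - l i) = ∏ i, -(l i - z) := Finset.prod_congr rfl fun i _ => (neg_sub _ _).symm
      _ = (-1) ^ n * ∏ i, (l i - z) := by rw [Finset.prod_neg, Finset.card_univ, Fintype.card_fin]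
  rw [hprod, BlaschkeProd, mul_left_comm, ← Finset.prod_mul_distrib]
  congr 1
  exact Finset.prod_congr rfl fun i _ => div_mul_cancel₀ _ (hz i)

theorem coef_blaschkeProd_mul_eval {n : ℕ} (l : Fin n → ℂ) (q : ℂ[X]) (k : ℕ) :
    coef (fun z => BlaschkeProd l z *
        (Polynomial.C ((-1) ^ n) * blaschkeDenom (Finset.univ.val.map l) * q).eval z) k =
      (((Finset.univ.val.map l).map fun w => Polynomial.X - Polynomial.C w).prod * q).coeff k := by
  have hQ (z : ℂ) :
      (blaschkeDenom (Finset.univ.val.map l)).eval z = ∏ i, (1 - conj (l i) * z) := by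
    rw [blaschkeDenom, Multiset.map_map, Finset.prod_map_val, Polynomial.eval_prod]
    simp
  have hP (z : ℂ) : ((Finset.univ.val.map l).map fun w => Polynomial.X - Polynomial.C w).prod.eval z
      = ∏ i, (z - l i) := by
    rw [Multiset.map_map, Finset.prod_map_val, Polynomial.eval_prod]
    simp
  rw [← coef_polynomial_eval, coef, coef, Filter.EventuallyEq.iteratedDeriv_eq k]
  filter_upwards [eventually_blaschkeProd_mul_eq l] with z hz
  simp only [Polynomial.eval_mul, Polynomial.eval_C, hQ, hP, ← hz]
  ring

theorem MemKB.coeff_blaschkeDenom_mul_eq_zero {n : ℕ} {l : Fin n → ℂ} {g : ℂ → ℂ}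
    (hg : MemKB l g) {M : ℕ} (hM : n ≤ M) :
    coeff M ((blaschkeDenom (Finset.univ.val.map l) : ℂ⟦X⟧) * mk (coef g)) = 0 := by
  obtain ⟨m, rfl⟩ := Nat.exists_eq_add_of_le hM
  set P : ℂ[X] := ((Finset.univ.val.map l).map fun w => Polynomial.X - Polynomial.C w).prod
  have hF : (P * Polynomial.X ^ m).natDegree = n + m := by
    have hP : P.Monic :=
      Polynomial.monic_multiset_prod_of_monic _ _ fun w _ => Polynomial.monic_X_sub_C w
    rw [Polynomial.natDegree_mul_X_pow m hP.ne_zero,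
      Polynomial.natDegree_multiset_prod_X_sub_C_eq_card]
    simp
  have hFrev : ((P * Polynomial.X ^ m).map (starRingEnd ℂ)).reverse =
      blaschkeDenom (Finset.univ.val.map l) := by
    rw [Polynomial.map_mul, Polynomial.map_pow, Polynomial.map_X, Polynomial.reverse_mul_X_pow,
      reverse_map_conj_prod_X_sub_C]
  -- test the orthogonality against `B · (-1)ⁿ zᵐ ∏ (1 - conj (l i) z) = zᵐ ∏ (z - l i)`
  have hpair := hg.2 _ (memH2_polynomial_eval
    (Polynomial.C ((-1) ^ n) * blaschkeDenom (Finset.univ.val.map l) * Polynomial.X ^ m))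
  have hcoeff := tsum_coeff_mul_conj_coeff (mk (coef g)) (P * Polynomial.X ^ m)
  simp only [coeff_mk, hF, hFrev] at hcoeff
  simp only [cauchyPairing, coef_blaschkeProd_mul_eval] at hpair
  rw [mul_comm, ← hcoeff]
  exact hpair

theorem MemKB.memModelSpace {n : ℕ} {l : Fin n → ℂ} {g : ℂ → ℂ} (hg : MemKB l g) :
    MemModelSpace (Finset.univ.val.map l) (mk (coef g)) := by
  refine ⟨trunc n ((blaschkeDenom (Finset.univ.val.map l) : ℂ⟦X⟧) * mk (coef g)),
    by simpa using degree_trunc_lt _ n, ?_⟩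
  ext M
  rw [Polynomial.coeff_coe, coeff_trunc]
  split_ifs with h
  · rfl
  · exact hg.coeff_blaschkeDenom_mul_eq_zero (not_lt.mp h)

theorem bernstein_model_space_general (n : ℕ) (l : Fin n → ℂ)
    (r : ℝ) (hr1 : r < 1) (hl : ∀ i, ‖l i‖ ≤ r)
    (g : ℂ → ℂ) (hg : MemKB l g) :
    H2norm (deriv g) ≤ (5 / 2) * ((n : ℝ) / (1 - r)) * H2norm g := by
  have hzeros : ∀ w ∈ Finset.univ.val.map l, ‖w‖ ≤ r := by simpa using hl
  have h := hg.memModelSpace.l2Norm_derivative_le hr1 hzeros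
  rwa [Multiset.card_map, Finset.card_val, Finset.card_univ, Fintype.card_fin, ← mk_coef_deriv,
    ← H2norm_eq_l2Norm, ← H2norm_eq_l2Norm] at h

/-- Bernstein-type inequality for model spaces (Lemme 1, first part):
if `B` is a finite Blaschke product of degree `n` with zeros `l i` of modulus
at most `r < 1`, then every `g ∈ K_B` satisfies
`‖g′‖_{H²} ≤ (5/2) (n/(1-r)) ‖g‖_{H²}`. -/
theorem bernstein_model_space (n : ℕ) (hn : 1 ≤ n) (l : Fin n → ℂ)
    (r : ℝ) (hr0 : 0 ≤ r) (hr1 : r < 1) (hl : ∀ i, ‖l i‖ ≤ r)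
    (g : ℂ → ℂ) (hg : MemKB l g) :
    H2norm (deriv g) ≤ (5 / 2) * ((n : ℝ) / (1 - r)) * H2norm g :=
  bernstein_model_space_general n l r hr1 hl g hg
end
end

section
/- For every integer n ≥ 1 and every r ∈ [0,1), the interpolation constant C_{n,r}(H², H^∞) := sup{ c(σ, H², H^∞) : #σ ≤ n, σ ⊂ {|z| ≤ r} } satisfies C_{n,r}(H², H^∞) ≤ (2n/(1−r))^{1/2}. -/
open Complex Metric ComplexConjugate

noncomputable section

/-!
Peel off the nodes one at a time. For `|λ| ≤ r` write `k_λ z = (1 - λ̄ z)⁻¹` and `b_λ` for the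
Blaschke factor. Every `F ∈ H²` splits as `F = (1 - |λ|²) F(λ) k_λ - b_λ Q` with
`Q = (1 - λ̄ z) (F - F(λ)) / (z - λ) - λ̄ F(λ)` holomorphic and
`‖Q‖₂² = ‖F‖₂² - (1 - |λ|²) |F(λ)|²`. For the norm identity let `θ` be the Taylor coefficients
of `F(λ) + z (F - F(λ)) / (z - λ)`: then `F` and `Q` have coefficients `θₖ - λ θₖ₊₁` and
`θₖ₊₁ - λ̄ θₖ`, and `|x - λ y|² - |y - λ̄ x|² = (1 - |λ|²) (|x|² - |y|²)` makes the difference of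
the norms telescope. The telescoping sum converges because `θₖ → 0`, which follows from
`θₖ₊₁ = ∑_d a_{k+d+1} λ^d` where `a` are the Taylor coefficients of `F`.

Applying this to `f` at `λ₁`, then to the quotient `Q₁` at `λ₂`, and so on, gives `f = g + B h` with
`|g z| ≤ ∑ᵢ (1 - |λᵢ|²) |Qᵢ₋₁(λᵢ)| |k_{λᵢ} z|` and `∑ᵢ (1 - |λᵢ|²) |Qᵢ₋₁(λᵢ)|² ≤ ‖f‖₂²`
(`Q₀ = f`). Since `(1 - |λ|²) |k_λ z|² ≤ 2 / (1 - r)`, Cauchy–Schwarz gives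
`|g|² ≤ 2 n ‖f‖₂² / (1 - r)`.
-/
open Filter Topology FormalMultilinearSeries
open scoped NNReal ENNReal

theorem holOn_iff_differentiableOn {f : ℂ → ℂ} : HolOn f ↔ DifferentiableOn ℂ f (ball 0 1) :=
  analyticOn_iff_differentiableOn isOpen_ball

theorem mem_eball_zero_iff_norm_lt {y : ℂ} {R : ℝ≥0} : y ∈ eball (0 : ℂ) R ↔ ‖y‖ < R := by
  rw [mem_eball_zero_iff, enorm_eq_nnnorm, ENNReal.coe_lt_coe, ← NNReal.coe_lt_coe, coe_nnnorm]

theorem hasSum_coef_mul_pow {f : ℂ → ℂ} (hf : DifferentiableOn ℂ f (ball 0 1)) {z : ℂ}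
    (hz : ‖z‖ < 1) : HasSum (fun k => coef f k * z ^ k) (f z) := by
  obtain ⟨t, hzt, ht1⟩ := exists_between hz
  lift t to ℝ≥0 using (norm_nonneg z).trans hzt.le
  have h := (hf.mono (closedBall_subset_ball ht1)).hasFPowerSeriesOnBall
    (by exact_mod_cast (norm_nonneg z).trans_lt hzt)
  have hcoef : cauchyPowerSeries f 0 t = ofScalars ℂ (coef f) :=
    h.hasFPowerSeriesAt.eq_formalMultilinearSeries h.analyticAt.hasFPowerSeriesAt
  simpa [hcoef, ofScalars_apply_eq, mul_comm] using h.hasSum (mem_eball_zero_iff_norm_lt.2 hzt)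

theorem coef_eq_of_hasSum {f : ℂ → ℂ} {c : ℕ → ℂ}
    (h : ∀ z : ℂ, ‖z‖ < 1 → HasSum (fun k => c k * z ^ k) (f z)) : coef f = c := by
  have hrad : ((1 / 2 : ℝ≥0) : ℝ≥0∞) ≤ (ofScalars ℂ c).radius := by
    refine (ofScalars ℂ c).le_radius_of_tendsto (l := 0) ?_
    simpa [ofScalars_norm] using (h (1 / 2) (by norm_num)).summable.norm.tendsto_atTop_zero
  have hc : HasFPowerSeriesOnBall f (ofScalars ℂ c) 0 (1 / 2 : ℝ≥0) := by
    refine ⟨hrad, by norm_num, fun {y} hy => ?_⟩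
    have hy' : ‖y‖ < 1 := (mem_eball_zero_iff_norm_lt.1 hy).trans (by norm_num)
    simpa [ofScalars_apply_eq, mul_comm] using h y hy'
  exact ofScalars_series_injective ℂ ℂ
    (hc.analyticAt.hasFPowerSeriesAt.eq_formalMultilinearSeries hc.hasFPowerSeriesAt)

section Blaschke

def szegoKernel (l z : ℂ) : ℂ := (1 - conj l * z)⁻¹

variable {l z : ℂ}

theorem one_sub_conj_mul_ne_zero (hl : ‖l‖ < 1) (hz : ‖z‖ < 1) : 1 - conj l * z ≠ 0 := by
  refine sub_ne_zero.2 fun h => ?_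
  have : ‖conj l * z‖ < 1 := by
    rw [norm_mul, RCLike.norm_conj]
    nlinarith [norm_nonneg l, norm_nonneg z]
  simp [← h] at this

theorem differentiableOn_szegoKernel (hl : ‖l‖ < 1) :
    DifferentiableOn ℂ (szegoKernel l) (ball 0 1) :=
  ((differentiableOn_const 1).sub ((differentiableOn_const _).mul differentiableOn_id)).inv
    fun _ hz => one_sub_conj_mul_ne_zero hl (mem_ball_zero_iff.1 hz)

theorem differentiableOn_blaschke (hl : ‖l‖ < 1) : DifferentiableOn ℂ (blaschke l) (ball 0 1) :=
  ((differentiableOn_const l).sub differentiableOn_id).div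
    ((differentiableOn_const 1).sub ((differentiableOn_const _).mul differentiableOn_id))
    fun _ hz => one_sub_conj_mul_ne_zero hl (mem_ball_zero_iff.1 hz)

theorem norm_blaschke_le_one (hl : ‖l‖ < 1) (hz : ‖z‖ < 1) : ‖blaschke l z‖ ≤ 1 := by
  rw [blaschke, norm_div]
  refine div_le_one_of_le₀ ?_ (norm_nonneg _)
  have key : normSq (1 - conj l * z) - normSq (l - z) = (1 - normSq l) * (1 - normSq z) := by
    simp only [normSq_apply, sub_re, sub_im, mul_re, mul_im, one_re, one_im, conj_re, conj_im]
    ring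
  have hl' : normSq l < 1 := by rw [← Complex.sq_norm]; nlinarith [norm_nonneg l]
  have hz' : normSq z < 1 := by rw [← Complex.sq_norm]; nlinarith [norm_nonneg z]
  rw [norm_def, norm_def]
  exact Real.sqrt_le_sqrt (by nlinarith)

theorem one_sub_norm_sq_mul_norm_szegoKernel_sq_le (hl : ‖l‖ < 1) (hz : ‖z‖ < 1) :
    (1 - ‖l‖ ^ 2) * ‖szegoKernel l z‖ ^ 2 ≤ 2 / (1 - ‖l‖) := by
  have hl0 : 0 < 1 - ‖l‖ := sub_pos.2 hl
  have hdist : 1 - ‖l‖ ≤ ‖1 - conj l * z‖ :=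
    calc 1 - ‖l‖ ≤ ‖(1 : ℂ)‖ - ‖conj l * z‖ := by
          rw [norm_one, norm_mul, RCLike.norm_conj]
          nlinarith [norm_nonneg l, norm_nonneg z]
      _ ≤ ‖1 - conj l * z‖ := norm_sub_norm_le _ _
  rw [szegoKernel, norm_inv, inv_pow, ← div_eq_mul_inv]
  calc (1 - ‖l‖ ^ 2) / ‖1 - conj l * z‖ ^ 2 ≤ (1 - ‖l‖ ^ 2) / (1 - ‖l‖) ^ 2 := by
        gcongr
        nlinarith [norm_nonneg l]
    _ = (1 + ‖l‖) / (1 - ‖l‖) := by field_simp; ring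
    _ ≤ 2 / (1 - ‖l‖) := by gcongr; linarith

end Blaschke

section BlaschkeQuotient

variable {l : ℂ} {F : ℂ → ℂ}

def blaschkeQuotient (l : ℂ) (F : ℂ → ℂ) (z : ℂ) : ℂ :=
  (1 - conj l * z) * dslope F l z - conj l * F l

/-- Taylor coefficients of `z ↦ F l + z * dslope F l z`. -/
def consDslopeCoef (l : ℂ) (F : ℂ → ℂ) : ℕ → ℂ
  | 0 => F l
  | k + 1 => coef (dslope F l) k

theorem eq_add_sub_mul_dslope (z : ℂ) : F z = F l + (z - l) * dslope F l z := by
  rw [← smul_eq_mul, sub_smul_dslope, add_sub_cancel]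

theorem differentiableOn_dslope_ball (hl : ‖l‖ < 1) (hF : DifferentiableOn ℂ F (ball 0 1)) :
    DifferentiableOn ℂ (dslope F l) (ball 0 1) :=
  (Complex.differentiableOn_dslope (isOpen_ball.mem_nhds (mem_ball_zero_iff.2 hl))).2 hF

theorem differentiableOn_blaschkeQuotient (hl : ‖l‖ < 1)
    (hF : DifferentiableOn ℂ F (ball 0 1)) :
    DifferentiableOn ℂ (blaschkeQuotient l F) (ball 0 1) :=
  (((differentiableOn_const 1).sub ((differentiableOn_const _).mul differentiableOn_id)).mul
    (differentiableOn_dslope_ball hl hF)).sub (differentiableOn_const _)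

theorem eq_szegoKernel_sub_blaschke_mul_blaschkeQuotient (hl : ‖l‖ < 1) {z : ℂ}
    (hz : ‖z‖ < 1) :
    F z = (1 - ‖l‖ ^ 2 : ℝ) * F l * szegoKernel l z
      - blaschke l z * blaschkeQuotient l F z := by
  have hinv : (1 - conj l * z) * (1 - conj l * z)⁻¹ = 1 :=
    mul_inv_cancel₀ (one_sub_conj_mul_ne_zero hl hz)
  rw [szegoKernel, blaschke, blaschkeQuotient, eq_add_sub_mul_dslope (F := F) (l := l) z,
    div_eq_mul_inv]
  push_cast
  rw [← conj_mul']
  linear_combination (-(F l + (z - l) * dslope F l z)) * hinv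

theorem hasSum_consDslopeCoef (hl : ‖l‖ < 1) (hF : DifferentiableOn ℂ F (ball 0 1)) {z : ℂ}
    (hz : ‖z‖ < 1) :
    HasSum (fun k => consDslopeCoef l F k * z ^ k) (F l + z * dslope F l z) := by
  refine (hasSum_nat_add_iff' 1).1 ?_
  rw [Finset.sum_range_one, consDslopeCoef, pow_zero, mul_one, add_sub_cancel_left]
  exact ((hasSum_coef_mul_pow (differentiableOn_dslope_ball hl hF) hz).mul_left z).congr_fun
    fun k => by rw [consDslopeCoef, pow_succ]; ring

theorem coef_eq_consDslopeCoef_sub (hl : ‖l‖ < 1) (hF : DifferentiableOn ℂ F (ball 0 1))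
    (k : ℕ) : coef F k = consDslopeCoef l F k - l * consDslopeCoef l F (k + 1) := by
  suffices h : coef F = fun k => consDslopeCoef l F k - l * consDslopeCoef l F (k + 1) from
    congrFun h k
  refine coef_eq_of_hasSum fun z hz => ?_
  have hFz : F z = F l + z * dslope F l z - l * dslope F l z := by
    rw [eq_add_sub_mul_dslope (F := F) (l := l) z]; ring
  rw [hFz]
  exact ((hasSum_consDslopeCoef hl hF hz).sub
    ((hasSum_coef_mul_pow (differentiableOn_dslope_ball hl hF) hz).mul_left l)).congr_fun
    fun k => by rw [consDslopeCoef]; ring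

theorem coef_blaschkeQuotient (hl : ‖l‖ < 1) (hF : DifferentiableOn ℂ F (ball 0 1)) (k : ℕ) :
    coef (blaschkeQuotient l F) k =
      consDslopeCoef l F (k + 1) - conj l * consDslopeCoef l F k := by
  suffices h : coef (blaschkeQuotient l F) =
      fun k => consDslopeCoef l F (k + 1) - conj l * consDslopeCoef l F k from congrFun h k
  refine coef_eq_of_hasSum fun z hz => ?_
  have hQ : blaschkeQuotient l F z = dslope F l z - conj l * (F l + z * dslope F l z) := by
    rw [blaschkeQuotient]; ring
  rw [hQ]
  exact ((hasSum_coef_mul_pow (differentiableOn_dslope_ball hl hF) hz).sub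
    ((hasSum_consDslopeCoef hl hF hz).mul_left (conj l))).congr_fun
    fun k => by rw [consDslopeCoef]; ring

end BlaschkeQuotient

section Isometry

variable {l : ℂ} {F : ℂ → ℂ}

theorem hasSum_coef_dslope (hl : ‖l‖ < 1) (hF : DifferentiableOn ℂ F (ball 0 1)) {C : ℝ}
    (hC : ∀ k, ‖coef F k‖ ≤ C) (k : ℕ) :
    HasSum (fun d => coef F (k + d + 1) * l ^ d) (coef (dslope F l) k) := by
  set Θ := coef (dslope F l)
  have hrec (i : ℕ) : Θ i = coef F (i + 1) + l * Θ (i + 1) := by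
    rw [coef_eq_consDslopeCoef_sub hl hF]
    simp only [consDslopeCoef, Θ]
    ring
  have hpartial (D : ℕ) :
      ∑ d ∈ Finset.range D, coef F (k + d + 1) * l ^ d = Θ k - l ^ D * Θ (k + D) := by
    induction D with
    | zero => simp
    | succ D ih =>
      rw [Finset.sum_range_succ, ih, hrec (k + D), ← add_assoc, pow_succ]
      ring
  have hvanish : Tendsto (fun D => l ^ D * Θ (k + D)) atTop (𝓝 0) := by
    rcases eq_or_ne l 0 with rfl | hl0
    · refine tendsto_const_nhds.congr' (eventually_atTop.2 ⟨1, fun D hD => ?_⟩)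
      simp [zero_pow (Nat.one_le_iff_ne_zero.1 hD)]
    · have h := ((hasSum_coef_mul_pow (differentiableOn_dslope_ball hl hF) hl).summable
        |>.tendsto_atTop_zero.comp (tendsto_add_atTop_nat k)).const_mul (l ^ k)⁻¹
      rw [mul_zero] at h
      refine h.congr fun D => ?_
      simp only [Function.comp_apply, pow_add]
      field_simp
      rw [add_comm]
  have hsummable : Summable fun d => coef F (k + d + 1) * l ^ d :=
    .of_norm_bounded ((summable_geometric_of_lt_one (norm_nonneg l) hl).mul_left C) fun d => by
      rw [norm_mul, norm_pow]
      exact mul_le_mul_of_nonneg_right (hC _) (by positivity)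
  rw [hsummable.hasSum_iff_tendsto_nat]
  simpa [hpartial] using tendsto_const_nhds.sub hvanish

theorem tendsto_coef_dslope (hl : ‖l‖ < 1) (hF : DifferentiableOn ℂ F (ball 0 1))
    (ha : Tendsto (coef F) atTop (𝓝 0)) : Tendsto (coef (dslope F l)) atTop (𝓝 0) := by
  obtain ⟨C, hC⟩ := ha.norm.bddAbove_range
  have hC' (k : ℕ) : ‖coef F k‖ ≤ C := hC ⟨k, rfl⟩
  have h := tendsto_tsum_of_dominated_convergence (f := fun k d => coef F (k + d + 1) * l ^ d)
    (g := fun _ => 0) ((summable_geometric_of_lt_one (norm_nonneg l) hl).mul_left C)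
    (fun d => by
      simpa [add_assoc] using (ha.comp (tendsto_add_atTop_nat (d + 1))).mul_const (l ^ d))
    (.of_forall fun k d => by
      rw [norm_mul, norm_pow]
      exact mul_le_mul_of_nonneg_right (hC' _) (by positivity))
  simpa [fun k => (hasSum_coef_dslope hl hF hC' k).tsum_eq] using h

theorem norm_sq_sub_mul_eq (x y c : ℂ) :
    ‖x - c * y‖ ^ 2 = ‖y - conj c * x‖ ^ 2 + (1 - ‖c‖ ^ 2) * (‖x‖ ^ 2 - ‖y‖ ^ 2) := by
  simp only [Complex.sq_norm, normSq_apply, sub_re, sub_im, mul_re, mul_im, conj_re, conj_im]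
  ring

theorem tendsto_coef_of_summable_norm_sq (hs : Summable fun k => ‖coef F k‖ ^ 2) :
    Tendsto (coef F) atTop (𝓝 0) := by
  rw [tendsto_zero_iff_norm_tendsto_zero]
  simpa [Real.sqrt_sq (norm_nonneg _)] using hs.tendsto_atTop_zero.sqrt

theorem hasSum_norm_sq_coef_blaschkeQuotient (hl : ‖l‖ < 1)
    (hF : DifferentiableOn ℂ F (ball 0 1)) (hs : Summable fun k => ‖coef F k‖ ^ 2) :
    HasSum (fun k => ‖coef (blaschkeQuotient l F) k‖ ^ 2)
      ((∑' k, ‖coef F k‖ ^ 2) - (1 - ‖l‖ ^ 2) * ‖F l‖ ^ 2) := by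
  set θ := consDslopeCoef l F
  have hpt (k : ℕ) : ‖coef (blaschkeQuotient l F) k‖ ^ 2
      = ‖coef F k‖ ^ 2 - (1 - ‖l‖ ^ 2) * (‖θ k‖ ^ 2 - ‖θ (k + 1)‖ ^ 2) := by
    rw [coef_eq_consDslopeCoef_sub hl hF, norm_sq_sub_mul_eq, coef_blaschkeQuotient hl hF]
    ring
  have hθ : Tendsto (fun N => ‖θ N‖ ^ 2) atTop (𝓝 0) := by
    refine (tendsto_add_atTop_iff_nat 1).1 ?_
    simpa [θ, consDslopeCoef] using
      ((tendsto_coef_dslope hl hF (tendsto_coef_of_summable_norm_sq hs)).norm.pow 2)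
  rw [hasSum_iff_tendsto_nat_of_nonneg (fun k => sq_nonneg _)]
  simp_rw [hpt, Finset.sum_sub_distrib, ← Finset.mul_sum, Finset.sum_range_sub']
  simpa [θ, consDslopeCoef] using
    hs.hasSum.tendsto_sum_nat.sub ((hθ.const_sub (‖F l‖ ^ 2)).const_mul (1 - ‖l‖ ^ 2))

end Isometry

theorem H2norm_sq (F : ℂ → ℂ) : H2norm F ^ 2 = ∑' k, ‖coef F k‖ ^ 2 :=
  Real.sq_sqrt (tsum_nonneg fun _ => sq_nonneg _)

theorem MemH2.blaschkeQuotient {l : ℂ} {F : ℂ → ℂ} (hl : ‖l‖ < 1) (hF : MemH2 F) :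
    MemH2 (blaschkeQuotient l F) ∧
      H2norm (blaschkeQuotient l F) ^ 2 = H2norm F ^ 2 - (1 - ‖l‖ ^ 2) * ‖F l‖ ^ 2 := by
  have hF' := holOn_iff_differentiableOn.1 hF.1
  have h := hasSum_norm_sq_coef_blaschkeQuotient hl hF' hF.2
  exact ⟨⟨holOn_iff_differentiableOn.2 (differentiableOn_blaschkeQuotient hl hF'), h.summable⟩,
    by rw [H2norm_sq, H2norm_sq, h.tsum_eq]⟩

theorem sq_add_le_mul_add_mul {s t a b c d : ℝ} (hs : 0 ≤ s) (ht : 0 ≤ t) (ha : 0 ≤ a)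
    (hb : 0 ≤ b) (hc : 0 ≤ c) (hd : 0 ≤ d) (hsac : s ^ 2 ≤ a * c) (htbd : t ^ 2 ≤ b * d) :
    (s + t) ^ 2 ≤ (a + b) * (c + d) := by
  have hst : (2 * (s * t)) ^ 2 ≤ (a * d + b * c) ^ 2 := by
    nlinarith [mul_le_mul hsac htbd (sq_nonneg t) (mul_nonneg ha hc), sq_nonneg (a * d - b * c)]
  nlinarith [(sq_le_sq₀ (by positivity) (by positivity)).1 hst]

theorem norm_sq_szegoKernel_sub_blaschke_mul_le {l z w G : ℂ} {r β M : ℝ} (hlr : ‖l‖ ≤ r)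
    (hr : r < 1) (hz : ‖z‖ < 1) (hβ : 0 ≤ β) (hM : 0 ≤ M) (hG : ‖G‖ ^ 2 ≤ β * M) :
    ‖(1 - ‖l‖ ^ 2 : ℝ) * w * szegoKernel l z - blaschke l z * G‖ ^ 2
      ≤ ((1 - ‖l‖ ^ 2) * ‖w‖ ^ 2 + β) * (2 / (1 - r) + M) := by
  have hl : ‖l‖ < 1 := hlr.trans_lt hr
  have hl2 : 0 ≤ 1 - ‖l‖ ^ 2 := by nlinarith [norm_nonneg l]
  set T := (1 - ‖l‖ ^ 2) * ‖w‖ * ‖szegoKernel l z‖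
  have hsum : ‖(1 - ‖l‖ ^ 2 : ℝ) * w * szegoKernel l z - blaschke l z * G‖ ≤ T + ‖G‖ := by
    refine (norm_sub_le _ _).trans (add_le_add ?_ ?_)
    · rw [norm_mul, norm_mul, norm_real, Real.norm_of_nonneg hl2]
    · rw [norm_mul]
      exact mul_le_of_le_one_left (norm_nonneg G) (norm_blaschke_le_one hl hz)
  have hkernel : (1 - ‖l‖ ^ 2) * ‖szegoKernel l z‖ ^ 2 ≤ 2 / (1 - r) :=
    (one_sub_norm_sq_mul_norm_szegoKernel_sq_le hl hz).trans
      (div_le_div_of_nonneg_left zero_le_two (by linarith) (by linarith))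
  have hT : T ^ 2 ≤ (1 - ‖l‖ ^ 2) * ‖w‖ ^ 2 * (2 / (1 - r)) := by
    calc T ^ 2 = (1 - ‖l‖ ^ 2) * ‖w‖ ^ 2 * ((1 - ‖l‖ ^ 2) * ‖szegoKernel l z‖ ^ 2) := by ring
      _ ≤ _ := by gcongr
  have hT0 : 0 ≤ T := by positivity
  calc _ ≤ (T + ‖G‖) ^ 2 := by gcongr
    _ ≤ _ := sq_add_le_mul_add_mul hT0 (norm_nonneg G) (by positivity) hβ
        (div_nonneg zero_le_two (by linarith)) hM hT hG

theorem exists_decomp_blaschkeProd {r : ℝ} (hr : r < 1) {m : ℕ} (l : Fin m → ℂ)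
    (hl : ∀ i, ‖l i‖ ≤ r) {F : ℂ → ℂ} (hF : MemH2 F) :
    ∃ g h : ℂ → ℂ, HolOn g ∧ HolOn h ∧
      (∀ z ∈ ball (0 : ℂ) 1, F z = g z + BlaschkeProd l z * h z) ∧
      ∀ z ∈ ball (0 : ℂ) 1, ‖g z‖ ^ 2 ≤ H2norm F ^ 2 * (2 * m / (1 - r)) := by
  induction m generalizing F with
  | zero => exact ⟨0, F, analyticOn_const, hF.1, by simp [BlaschkeProd], by simp⟩
  | succ m ih =>
    have hl0 : ‖l 0‖ < 1 := (hl 0).trans_lt hr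
    obtain ⟨hQ, hQnorm⟩ := hF.blaschkeQuotient hl0
    obtain ⟨g, h, hg, hh, hdecomp, hbound⟩ := ih (Fin.tail l) (fun i => hl i.succ) hQ
    refine ⟨fun z => (1 - ‖l 0‖ ^ 2 : ℝ) * F (l 0) * szegoKernel (l 0) z
      - blaschke (l 0) z * g z, fun z => -h z, ?_, hh.neg, fun z hz => ?_, fun z hz => ?_⟩
    · exact holOn_iff_differentiableOn.2 (((differentiableOn_const _).mul
        (differentiableOn_szegoKernel hl0)).sub
        ((differentiableOn_blaschke hl0).mul (holOn_iff_differentiableOn.1 hg)))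
    · rw [eq_szegoKernel_sub_blaschke_mul_blaschkeQuotient (F := F) hl0 (mem_ball_zero_iff.1 hz),
        hdecomp z hz]
      simp only [BlaschkeProd, Fin.prod_univ_succ, Fin.tail]
      ring
    · calc _ ≤ ((1 - ‖l 0‖ ^ 2) * ‖F (l 0)‖ ^ 2 + H2norm (blaschkeQuotient (l 0) F) ^ 2)
            * (2 / (1 - r) + 2 * m / (1 - r)) :=
          norm_sq_szegoKernel_sub_blaschke_mul_le (hl 0) hr (mem_ball_zero_iff.1 hz) (sq_nonneg _)
            (div_nonneg (by positivity) (by linarith)) (hbound z hz)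
        _ = _ := by
          rw [hQnorm]
          push_cast
          ring

theorem Hinfnorm_nonneg {g : ℂ → ℂ} (hg : MemHinf g) : 0 ≤ Hinfnorm g :=
  (norm_nonneg (g 0)).trans (le_csSup hg.2 ⟨0, mem_ball_self one_pos, rfl⟩)

theorem Hinfnorm_le {g : ℂ → ℂ} {M : ℝ} (hg : ∀ z ∈ ball (0 : ℂ) 1, ‖g z‖ ≤ M) :
    Hinfnorm g ≤ M :=
  csSup_le ((nonempty_ball.2 one_pos).image _) (Set.forall_mem_image.2 hg)

theorem cH2Hinf_le {r : ℝ} (hr : r < 1) {m : ℕ} (l : Fin m → ℂ) (hl : ∀ i, ‖l i‖ ≤ r) :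
    cH2Hinf l ≤ √(2 * m / (1 - r)) := by
  refine Real.sSup_le ?_ (Real.sqrt_nonneg _)
  rintro _ ⟨f, hf, hf1, rfl⟩
  obtain ⟨g, h, hg, hh, hdecomp, hbound⟩ := exists_decomp_blaschkeProd hr l hl hf
  have hgM (z : ℂ) (hz : z ∈ ball (0 : ℂ) 1) : ‖g z‖ ≤ √(2 * m / (1 - r)) := by
    have hC : 0 ≤ 2 * (m : ℝ) / (1 - r) := div_nonneg (by positivity) (by linarith)
    refine (Real.le_sqrt (norm_nonneg _) hC).2 ((hbound z hz).trans ?_)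
    exact mul_le_of_le_one_left hC (pow_le_one₀ (Real.sqrt_nonneg _) hf1)
  have hAgree : AgreeOn l f g := ⟨h, hh, fun z hz => by rw [hdecomp z hz]; ring⟩
  have hbdd : BddBelow {m | ∃ g, MemHinf g ∧ Hinfnorm g = m ∧ AgreeOn l f g} :=
    ⟨0, by rintro _ ⟨g', hg', rfl, -⟩; exact Hinfnorm_nonneg hg'⟩
  exact (csInf_le hbdd ⟨g, ⟨hg, _, Set.forall_mem_image.2 hgM⟩, rfl, hAgree⟩).trans
    (Hinfnorm_le hgM)

theorem Cnr_H2_Hinf_upper_general (n : ℕ) (r : ℝ) (hr1 : r < 1) :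
    CnrH2Hinf n r ≤ Real.sqrt (2 * (n : ℝ) / (1 - r)) := by
  refine Real.sSup_le ?_ (Real.sqrt_nonneg _)
  rintro _ ⟨m, hm, l, hl, rfl⟩
  refine (cH2Hinf_le hr1 l hl).trans (Real.sqrt_le_sqrt ?_)
  have : 0 < 1 - r := by linarith
  gcongr

/-- Upper bound for the interpolation constant:
`C_{n,r}(H², H^∞) ≤ (2n/(1-r))^{1/2}`. -/
theorem Cnr_H2_Hinf_upper (n : ℕ) (hn : 1 ≤ n) (r : ℝ) (hr0 : 0 ≤ r) (hr1 : r < 1) :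
    CnrH2Hinf n r ≤ Real.sqrt (2 * (n : ℝ) / (1 - r)) :=
  Cnr_H2_Hinf_upper_general n r hr1
end
end
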